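/- arXiv:1503.05397 — 2 statements merged into one kernel-verified Lean document; each statement's English description precedes it below -/
import Mathlib

section
/- Let X be a metric space, let m be a σ-algebra on X containing the Borel σ-algebra, and let μ be a measure on (X, m) that is finite on bounded m-measurable sets. Let 1 ≤ p < ∞ and let f ∈ L^p(μ) be such that f has a Borel-measurable representative (i.e., f = g₀ μ-a.e. for some Borel-measurable g₀ : X → ℝ). Then for every ε > 0 there exists a Lipschitz function g : X → ℝ with bounded support such that ‖f − g‖_{L^p(μ)} < ε. -/
/-!
Passing to `μ.trim` along `borel X ≤ m` moves the problem to the Borel σ-algebra, where the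
restriction of `μ` to a set of finite measure is inner regular by closed sets; the Borel
representative of `f` is what makes its `L^p` distance to a continuous function visible to the
trimmed measure. By density of simple functions it suffices to approximate `s.indicator c`.
Choose a closed bounded `F ⊆ s` with `μ (s \ F)` small and replace the indicator by the
`δ⁻¹`-Lipschitz thickened indicator of `F`: the error is at most `‖c‖` on
`(s ∪ thickening δ F) \ F`, whose measure is small for small `δ` since `F` is closed.
-/

open MeasureTheory Bornology Metric Set Filter Function Topology
open scoped ENNReal NNReal

lemma lipschitzWith_smul_const {E : Type*} [NormedAddCommGroup E] [NormedSpace ℝ E] (c : E) :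
    LipschitzWith ‖c‖₊ fun r : ℝ => r • c :=
  LipschitzWith.of_dist_le_mul fun r s => by
    rw [dist_eq_norm, dist_eq_norm, ← sub_smul, norm_smul, mul_comm]
    rfl

lemma norm_thickenedIndicator_smul_sub_indicator_le {X E : Type*} [PseudoMetricSpace X]
    [NormedAddCommGroup E] [NormedSpace ℝ E] {δ : ℝ} (hδ : 0 < δ) {F s : Set X}
    (hFs : F ⊆ s) (c : E) (x : X) :
    ‖((thickenedIndicator hδ F x : ℝ≥0) : ℝ) • c - s.indicator (fun _ => c) x‖
      ≤ ‖((s ∪ thickening δ F) \ F).indicator (fun _ => c) x‖ := by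
  set t : ℝ := ((thickenedIndicator hδ F x : ℝ≥0) : ℝ)
  have ht₀ : 0 ≤ t := NNReal.coe_nonneg _
  have ht₁ : t ≤ 1 := by exact_mod_cast thickenedIndicator_le_one hδ F x
  by_cases hxF : x ∈ F
  · simp [t, thickenedIndicator_one hδ F hxF, hFs hxF, hxF]
  by_cases hx : x ∈ s ∪ thickening δ F
  · rw [indicator_of_mem (show x ∈ (s ∪ thickening δ F) \ F from ⟨hx, hxF⟩)]
    by_cases hxs : x ∈ s
    · rw [indicator_of_mem hxs, show t • c - c = (t - 1) • c by rw [sub_smul, one_smul],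
        norm_smul, Real.norm_eq_abs]
      exact mul_le_of_le_one_left (norm_nonneg c) (abs_le.2 ⟨by linarith, by linarith⟩)
    · rw [indicator_of_notMem hxs, sub_zero, norm_smul, Real.norm_of_nonneg ht₀]
      exact mul_le_of_le_one_left (norm_nonneg c) ht₁
  · have hxt : x ∉ thickening δ F := fun h => hx (Or.inr h)
    have hxs : x ∉ s := fun h => hx (Or.inl h)
    simp [t, thickenedIndicator_zero hδ F hxt, hxs]

section

variable {X : Type*} [PseudoMetricSpace X] [MeasurableSpace X] {μ : Measure X} {ε : ℝ≥0∞}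

lemma exists_pos_measure_thickening_sdiff_lt [OpensMeasurableSpace X] {F : Set X}
    (hFc : IsClosed F) (hF : ∃ R > 0, μ (thickening R F) ≠ ∞) (hε : ε ≠ 0) :
    ∃ δ > 0, μ (thickening δ F \ F) < ε := by
  obtain ⟨R, hR, hRF⟩ := hF
  have hμF : μ F ≠ ∞ := ne_top_of_le_ne_top hRF (measure_mono (self_subset_thickening hR F))
  have hlim : ∀ᶠ δ in 𝓝[>] 0, μ (thickening δ F) < μ F + ε :=
    (tendsto_measure_thickening_of_isClosed ⟨R, hR, hRF⟩ hFc).eventually_lt_const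
      (ENNReal.lt_add_right hμF hε)
  obtain ⟨δ, hδF, hδ⟩ := (hlim.and self_mem_nhdsWithin).exists
  exact ⟨δ, hδ, measure_sdiff_lt_of_lt_add hFc.nullMeasurableSet
    (self_subset_thickening hδ F) hμF hδF⟩

lemma exists_isClosed_isBounded_subset_measure_sdiff_lt [BorelSpace X] {s : Set X}
    (hs : MeasurableSet s) (hμs : μ s ≠ ∞) (hε : ε ≠ 0) :
    ∃ F ⊆ s, IsClosed F ∧ IsBounded F ∧ μ (s \ F) < ε := by
  rcases s.eq_empty_or_nonempty with rfl | ⟨x₀, -⟩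
  · exact ⟨∅, subset_rfl, isClosed_empty, isBounded_empty,
      by simpa using pos_iff_ne_zero.2 hε⟩
  have hε₂ : ε / 2 ≠ 0 := by simpa using hε
  have : IsFiniteMeasure (μ.restrict s) := ⟨by simpa using hμs.lt_top⟩
  obtain ⟨F, hFs, hFc, hsF⟩ := hs.exists_isClosed_sdiff_lt (μ := μ.restrict s)
    (measure_ne_top _ _) hε₂
  rw [Measure.restrict_eq_self _ sdiff_subset] at hsF
  have hfar : Tendsto (fun n : ℕ => μ (s \ closedBall x₀ n)) atTop (𝓝 0) := by
    have hempty : ⋂ n : ℕ, s \ closedBall x₀ n = ∅ := by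
      rw [← sdiff_iUnion, iUnion_closedBall_nat, sdiff_univ]
    simpa [hempty, Function.comp_def] using tendsto_measure_iInter_atTop (μ := μ)
      (fun n => (hs.diff measurableSet_closedBall).nullMeasurableSet)
      (fun i j hij => sdiff_subset_sdiff_right <|
        closedBall_subset_closedBall (x := x₀) (Nat.cast_le.2 hij))
      ⟨0, ne_top_of_le_ne_top hμs (measure_mono sdiff_subset)⟩
  obtain ⟨n, hn⟩ := (hfar.eventually_lt_const (pos_iff_ne_zero.2 hε₂)).exists
  refine ⟨F ∩ closedBall x₀ n, inter_subset_left.trans hFs, hFc.inter isClosed_closedBall,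
    isBounded_closedBall.subset inter_subset_right, ?_⟩
  calc μ (s \ (F ∩ closedBall x₀ n)) ≤ μ (s \ F) + μ (s \ closedBall x₀ n) := by
        rw [sdiff_inter]; exact measure_union_le _ _
    _ < ε / 2 + ε / 2 := ENNReal.add_lt_add hsF hn
    _ = ε := ENNReal.add_halves ε

end

section

variable {X E : Type*} [PseudoMetricSpace X] [MeasurableSpace X] [BorelSpace X]
  [NormedAddCommGroup E] [NormedSpace ℝ E] {μ : Measure X} {p ε : ℝ≥0∞}

theorem exists_lipschitz_isBounded_support_eLpNorm_sub_indicator_le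
    (hμ : ∀ A : Set X, MeasurableSet A → IsBounded A → μ A < ∞) (hp : p ≠ ∞) (c : E)
    {s : Set X} (hs : MeasurableSet s) (hμs : μ s < ∞) (hε : ε ≠ 0) :
    ∃ g : X → E, eLpNorm (g - s.indicator fun _ => c) p μ ≤ ε ∧
      (∃ C, LipschitzWith C g) ∧ IsBounded (support g) := by
  obtain ⟨η, hη₀, hη⟩ := exists_eLpNorm_indicator_le (μ := μ) hp c hε
  have hη₂ : (η / 2 : ℝ≥0∞) ≠ 0 := by simpa using hη₀.ne'
  obtain ⟨F, hFs, hFc, hFb, hsF⟩ :=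
    exists_isClosed_isBounded_subset_measure_sdiff_lt hs hμs.ne hη₂
  obtain ⟨δ, hδ, hδF⟩ := exists_pos_measure_thickening_sdiff_lt hFc
    ⟨1, one_pos, (hμ _ isOpen_thickening.measurableSet hFb.thickening).ne⟩ hη₂
  refine ⟨fun x => ((thickenedIndicator hδ F x : ℝ≥0) : ℝ) • c, ?_,
    ⟨_, (lipschitzWith_smul_const c).comp
      (NNReal.isometry_coe.lipschitz.comp (lipschitzWith_thickenedIndicator hδ F))⟩,
    (hFb.thickening (δ := δ)).subset fun x hx => ?_⟩
  · refine (eLpNorm_mono (norm_thickenedIndicator_smul_sub_indicator_le hδ hFs c)).trans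
      (hη _ ?_)
    calc μ ((s ∪ thickening δ F) \ F) ≤ μ (s \ F) + μ (thickening δ F \ F) := by
          rw [union_sdiff_distrib]; exact measure_union_le _ _
      _ ≤ η / 2 + η / 2 := add_le_add hsF.le hδF.le
      _ = η := ENNReal.add_halves _
  · by_contra hxF
    exact hx (by simp only; rw [thickenedIndicator_zero hδ F hxF, NNReal.coe_zero, zero_smul])

theorem MemLp.exists_lipschitz_isBounded_support_eLpNorm_sub_le [SecondCountableTopology E]
    (hμ : ∀ A : Set X, MeasurableSet A → IsBounded A → μ A < ∞) (hp : p ≠ ∞) {f : X → E}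
    (hf : MemLp f p μ) (hε : ε ≠ 0) :
    ∃ g : X → E, eLpNorm (f - g) p μ ≤ ε ∧ (∃ C, LipschitzWith C g) ∧ IsBounded (support g) :=
  hf.induction_dense hp _
    (fun c _ hs hμs _ hε ↦
      exists_lipschitz_isBounded_support_eLpNorm_sub_indicator_le hμ hp c hs hμs hε)
    (fun _ _ ⟨⟨C, hf⟩, hfb⟩ ⟨⟨D, hg⟩, hgb⟩ =>
      ⟨⟨C + D, hf.add hg⟩, (hfb.union hgb).subset (support_add _ _)⟩)
    (fun _ ⟨⟨_, hg⟩, _⟩ => hg.continuous.aestronglyMeasurable) hε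

end

theorem exists_lipschitz_isBounded_support_eLpNorm_sub_le_of_borel_le
    {X E : Type*} [PseudoMetricSpace X] [NormedAddCommGroup E] [NormedSpace ℝ E]
    [SecondCountableTopology E] {m : MeasurableSpace X} (hm : borel X ≤ m) {μ : Measure[m] X}
    (hμ : ∀ A : Set X, MeasurableSet[m] A → IsBounded A → μ A < ∞) {p ε : ℝ≥0∞}
    (hp : p ≠ ∞) {f : X → E} (hf : MemLp f p μ)
    (hfBorel : ∃ g₀ : X → E, StronglyMeasurable[borel X] g₀ ∧ f =ᵐ[μ] g₀) (hε : ε ≠ 0) :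
    ∃ g : X → E, eLpNorm (f - g) p μ ≤ ε ∧ (∃ C, LipschitzWith C g) ∧ IsBounded (support g) := by
  obtain ⟨g₀, hg₀, hfg₀⟩ := hfBorel
  let : MeasurableSpace X := borel X
  have : BorelSpace X := ⟨rfl⟩
  have hg₀_trim : MemLp g₀ p (μ.trim hm) :=
    ⟨hg₀.aestronglyMeasurable, (eLpNorm_trim hm hg₀).trans_lt (hf.ae_eq hfg₀).2⟩
  have hμ_trim (A : Set X) (hA : MeasurableSet A) (hAb : IsBounded A) : μ.trim hm A < ∞ :=
    (trim_measurableSet_eq hm hA).trans_lt (hμ A (hm A hA) hAb)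
  obtain ⟨g, hg, ⟨C, hC⟩, hgb⟩ :=
    MemLp.exists_lipschitz_isBounded_support_eLpNorm_sub_le hμ_trim hp hg₀_trim hε
  refine ⟨g, ?_, ⟨C, hC⟩, hgb⟩
  calc eLpNorm (f - g) p μ = eLpNorm (g₀ - g) p μ := eLpNorm_congr_ae (hfg₀.sub .rfl)
    _ = eLpNorm (g₀ - g) p (μ.trim hm) :=
      (eLpNorm_trim hm (hg₀.sub hC.continuous.stronglyMeasurable)).symm
    _ ≤ ε := hg

theorem lipschitz_boundedSupport_approx_of_borelRepresentative_general
    {X : Type*} [MetricSpace X] [m : MeasurableSpace X]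
    (hm : borel X ≤ m)
    (μ : Measure X)
    (hμ : ∀ A : Set X, MeasurableSet A → IsBounded A → μ A < ⊤)
    (p : ℝ)
    (f : X → ℝ) (hf : MemLp f (ENNReal.ofReal p) μ)
    (hfBorel : ∃ g₀ : X → ℝ, Measurable[borel X] g₀ ∧ f =ᵐ[μ] g₀)
    (ε : ℝ) (hε : 0 < ε) :
    ∃ (g : X → ℝ) (C : NNReal), LipschitzWith C g ∧
      IsBounded {x | g x ≠ 0} ∧
      eLpNorm (fun x => f x - g x) (ENNReal.ofReal p) μ < ENNReal.ofReal ε := by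
  have hε₂ : ENNReal.ofReal ε / 2 ≠ 0 := by simpa using hε
  obtain ⟨g, hfg, ⟨C, hC⟩, hgb⟩ := exists_lipschitz_isBounded_support_eLpNorm_sub_le_of_borel_le
    hm hμ ENNReal.ofReal_ne_top hf
    (hfBorel.imp fun _ h => ⟨h.1.stronglyMeasurable, h.2⟩) hε₂
  exact ⟨g, C, hC, hgb,
    hfg.trans_lt (ENNReal.half_lt_self (by simpa using hε) ENNReal.ofReal_ne_top)⟩

/-- Corrected conclusion of Proposition 4.5 of Aimar–Hartzstein without regularity:
on a metric space with a σ-algebra `m` containing the Borel sets and a measure `μ`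
finite on bounded `m`-measurable sets, every `f ∈ L^p(μ)` (`1 ≤ p < ∞`) that admits a
Borel-measurable representative can be approximated in `L^p` by Lipschitz functions of
bounded support. -/
theorem lipschitz_boundedSupport_approx_of_borelRepresentative
    {X : Type*} [MetricSpace X] [m : MeasurableSpace X]
    (hm : borel X ≤ m)
    (μ : Measure X)
    (hμ : ∀ A : Set X, MeasurableSet A → IsBounded A → μ A < ⊤)
    (p : ℝ) (hp : 1 ≤ p)
    (f : X → ℝ) (hf : MemLp f (ENNReal.ofReal p) μ)
    (hfBorel : ∃ g₀ : X → ℝ, Measurable[borel X] g₀ ∧ f =ᵐ[μ] g₀)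
    (ε : ℝ) (hε : 0 < ε) :
    ∃ (g : X → ℝ) (C : NNReal), LipschitzWith C g ∧
      IsBounded {x | g x ≠ 0} ∧
      eLpNorm (fun x => f x - g x) (ENNReal.ofReal p) μ < ENNReal.ofReal ε :=
  lipschitz_boundedSupport_approx_of_borelRepresentative_general (m := m) hm μ hμ p f hf hfBorel ε
    hε
end

section
/- Let X be a metric space, let m be a σ-algebra on X containing the Borel σ-algebra, and let μ be a measure on (X, m) that is finite on bounded m-measurable sets. Let 1 ≤ p < ∞ and η ∈ (0,1], and let f ∈ L^p(μ) have a Borel-measurable representative. Then for every ε > 0 there exists g : X → ℝ with bounded support, satisfying |g(x) − g(y)| ≤ C · d(x,y)^η for some constant C and all x, y ∈ X, such that ‖f − g‖_{L^p(μ)} < ε. -/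
open MeasureTheory Bornology Metric Set Filter Function
open scoped NNReal ENNReal Topology

/-!
It suffices to approximate `f` in `L^p` by Lipschitz functions with bounded support: such a
function is bounded, and a bounded Lipschitz function is Hölder of every exponent `η ≤ 1`.
Passing to the trimmed Borel measure (this is where the Borel representative is needed), density
of simple functions reduces the problem to `c • 1_s` for a Borel set `s` of finite measure.
Cut `s` down to a closed bounded `F ⊆ s` of almost full measure (the restriction of the measure to
a bounded set is finite, hence inner regular by closed sets); then `c • thickenedIndicator δ F` is
Lipschitz and differs from `c • 1_s` only on `(s \ F) ∪ (thickening δ F \ F)`, whose measure is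
small for small `δ`.
-/

section Holder

variable {X Y : Type*} [PseudoMetricSpace X] [PseudoMetricSpace Y]

lemma holderWith_zero_of_isBounded_range {f : X → Y} (hf : IsBounded (range f)) :
    HolderWith (diam (range f)).toNNReal 0 f := by
  intro x y
  rw [NNReal.coe_zero, ENNReal.rpow_zero, mul_one, edist_dist, ENNReal.ofNNReal_toNNReal]
  exact ENNReal.ofReal_le_ofReal (dist_le_diam_of_mem hf (mem_range_self x) (mem_range_self y))

/-- Interpolates between the exponents `1` (Lipschitz) and `0` (bounded range). -/
lemma LipschitzWith.exists_holderWith_of_isBounded_range {K : ℝ≥0} {f : X → Y}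
    (hf : LipschitzWith K f) (hb : IsBounded (range f)) {r : ℝ≥0} (hr : r ≤ 1) :
    ∃ C, HolderWith C r f := by
  have := (holderWith_one.2 hf).interpolate (holderWith_zero_of_isBounded_range hb)
    (add_tsub_cancel_of_le hr)
  simp only [one_mul, zero_mul, add_zero] at this
  exact ⟨_, this⟩

lemma LipschitzWith.isBounded_range_of_isBounded_support [Zero Y] {K : ℝ≥0} {f : X → Y}
    (hf : LipschitzWith K f) (hb : IsBounded (support f)) : IsBounded (range f) :=
  ((hf.isBounded_image hb).insert 0).subset (range_subset_insert_image_support f)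

end Holder

namespace MeasureTheory

section Approximation

variable {X : Type*} [PseudoMetricSpace X]

lemma norm_mul_thickenedIndicator_sub_indicator_le {δ : ℝ} (hδ : 0 < δ) {F s : Set X}
    (hFs : F ⊆ s) (c : ℝ) (x : X) :
    ‖c * thickenedIndicator hδ F x - s.indicator (fun _ => c) x‖ ≤
      ‖(s \ F ∪ thickening δ F \ F).indicator (fun _ => c) x‖ := by
  have h₀ : (0 : ℝ) ≤ thickenedIndicator hδ F x := NNReal.coe_nonneg _
  have h₁ : (thickenedIndicator hδ F x : ℝ) ≤ 1 := thickenedIndicator_le_one hδ F x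
  by_cases hxF : x ∈ F
  · simp [thickenedIndicator_one hδ F hxF, hFs hxF]
  by_cases hxs : x ∈ s
  · rw [indicator_of_mem hxs, indicator_of_mem (.inl ⟨hxs, hxF⟩), ← mul_sub_one, norm_mul]
    refine mul_le_of_le_one_right (norm_nonneg c) ?_
    rw [Real.norm_eq_abs, abs_le]
    constructor <;> linarith
  by_cases hxδ : x ∈ thickening δ F
  · rw [indicator_of_notMem hxs, indicator_of_mem (.inr ⟨hxδ, hxF⟩), sub_zero, norm_mul]
    refine mul_le_of_le_one_right (norm_nonneg c) ?_
    rwa [Real.norm_eq_abs, abs_of_nonneg h₀]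
  · simp [thickenedIndicator_zero hδ F hxδ, hxs]

variable [MeasurableSpace X]

lemma exists_isBounded_subset_measure_sdiff_lt [OpensMeasurableSpace X] (ν : Measure X)
    {s : Set X} (hs : MeasurableSet s) (hsν : ν s ≠ ∞) {ε : ℝ≥0∞} (hε : ε ≠ 0) :
    ∃ t ⊆ s, MeasurableSet t ∧ IsBounded t ∧ ν (s \ t) < ε := by
  rcases s.eq_empty_or_nonempty with rfl | ⟨x₀, -⟩
  · exact ⟨∅, subset_rfl, .empty, isBounded_empty, by simpa using pos_iff_ne_zero.2 hε⟩
  have hlim : Tendsto (fun n : ℕ => ν (s \ closedBall x₀ n)) atTop (𝓝 0) := by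
    have hempty : ⋂ n : ℕ, s \ closedBall x₀ n = ∅ := by
      rw [← sdiff_iUnion, iUnion_closedBall_nat, sdiff_univ]
    have hanti : Antitone fun n : ℕ => s \ closedBall x₀ n := fun a b hab =>
      sdiff_subset_sdiff_right (closedBall_subset_closedBall (Nat.cast_le.2 hab))
    have := tendsto_measure_iInter_atTop
      (fun n => (hs.diff measurableSet_closedBall).nullMeasurableSet) hanti
      ⟨0, ne_top_of_le_ne_top hsν (measure_mono sdiff_subset)⟩
    rwa [hempty, measure_empty] at this
  obtain ⟨n, hn⟩ := (hlim.eventually_lt_const (pos_iff_ne_zero.2 hε)).exists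
  refine ⟨s ∩ closedBall x₀ n, inter_subset_left, hs.inter measurableSet_closedBall,
    isBounded_closedBall.subset inter_subset_right, ?_⟩
  rwa [sdiff_self_inter]

variable [BorelSpace X] {ν : Measure X}

lemma exists_isClosed_isBounded_subset_measure_sdiff_lt
    (hν : ∀ A : Set X, MeasurableSet A → IsBounded A → ν A < ∞)
    {s : Set X} (hs : MeasurableSet s) (hsν : ν s ≠ ∞) {ε : ℝ≥0∞} (hε : ε ≠ 0) :
    ∃ F ⊆ s, IsClosed F ∧ IsBounded F ∧ ν (s \ F) < ε := by
  have hε2 : ε / 2 ≠ 0 := ENNReal.div_ne_zero.2 ⟨hε, ENNReal.ofNat_ne_top⟩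
  obtain ⟨t, hts, ht, htb, hst⟩ := exists_isBounded_subset_measure_sdiff_lt ν hs hsν hε2
  have : IsFiniteMeasure (ν.restrict t) := isFiniteMeasure_restrict.2 (hν t ht htb).ne
  obtain ⟨F, hFt, hF, htF⟩ := ht.exists_isClosed_sdiff_lt (measure_ne_top (ν.restrict t) t) hε2
  rw [Measure.restrict_eq_self _ sdiff_subset] at htF
  refine ⟨F, hFt.trans hts, hF, htb.subset hFt, ?_⟩
  calc ν (s \ F) ≤ ν (s \ t) + ν (t \ F) :=
        (measure_mono (sdiff_triangle s t F)).trans (measure_union_le _ _)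
    _ < ε / 2 + ε / 2 := ENNReal.add_lt_add hst htF
    _ = ε := ENNReal.add_halves ε

lemma exists_pos_measure_thickening_sdiff_lt
    (hν : ∀ A : Set X, MeasurableSet A → IsBounded A → ν A < ∞)
    {F : Set X} (hF : IsClosed F) (hFb : IsBounded F) {ε : ℝ≥0∞} (hε : ε ≠ 0) :
    ∃ δ > 0, ν (thickening δ F \ F) < ε := by
  have hFν : ν F ≠ ∞ := (hν F hF.measurableSet hFb).ne
  have hlim := tendsto_measure_thickening_of_isClosed
    ⟨1, one_pos, (hν _ isOpen_thickening.measurableSet hFb.thickening).ne⟩ hF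
  obtain ⟨δ, hδ, hδpos⟩ := ((hlim.eventually_lt_const (ENNReal.lt_add_right hFν hε)).and
    self_mem_nhdsWithin).exists
  exact ⟨δ, hδpos, measure_sdiff_lt_of_lt_add hF.nullMeasurableSet
    (self_subset_thickening hδpos F) hFν hδ⟩

lemma exists_lipschitzWith_isBounded_support_eLpNorm_sub_indicator_le
    (hν : ∀ A : Set X, MeasurableSet A → IsBounded A → ν A < ∞) {p : ℝ≥0∞} (hp : p ≠ ∞)
    (c : ℝ) {s : Set X} (hs : MeasurableSet s) (hsν : ν s < ∞) {ε : ℝ≥0∞} (hε : ε ≠ 0) :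
    ∃ g : X → ℝ, eLpNorm (g - s.indicator fun _ => c) p ν ≤ ε ∧
      IsBounded (support g) ∧ ∃ K, LipschitzWith K g := by
  obtain ⟨θ, hθ, hθε⟩ := exists_eLpNorm_indicator_le (μ := ν) hp c hε
  have hθ2 : (θ : ℝ≥0∞) / 2 ≠ 0 :=
    ENNReal.div_ne_zero.2 ⟨ENNReal.coe_ne_zero.2 hθ.ne', ENNReal.ofNat_ne_top⟩
  obtain ⟨F, hFs, hF, hFb, hsF⟩ :=
    exists_isClosed_isBounded_subset_measure_sdiff_lt hν hs hsν.ne hθ2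
  obtain ⟨δ, hδ, hδF⟩ := exists_pos_measure_thickening_sdiff_lt hν hF hFb hθ2
  refine ⟨fun x => c * thickenedIndicator hδ F x, ?_, ?_, _,
    (lipschitzWith_smul c).comp ((LipschitzWith.subtype_val _).comp
      (lipschitzWith_thickenedIndicator hδ F))⟩
  · refine (eLpNorm_mono (norm_mul_thickenedIndicator_sub_indicator_le hδ hFs c)).trans
      (hθε _ ?_)
    calc ν (s \ F ∪ thickening δ F \ F) ≤ ν (s \ F) + ν (thickening δ F \ F) :=
          measure_union_le _ _
      _ ≤ θ / 2 + θ / 2 := add_le_add hsF.le hδF.le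
      _ = θ := ENNReal.add_halves _
  · refine (hFb.thickening (δ := δ)).subset fun x hx => ?_
    by_contra hxδ
    exact hx (by simp [thickenedIndicator_zero hδ F hxδ])

theorem MemLp.exists_lipschitzWith_isBounded_support_eLpNorm_sub_le
    (hν : ∀ A : Set X, MeasurableSet A → IsBounded A → ν A < ∞) {p : ℝ≥0∞} (hp : p ≠ ∞)
    {f : X → ℝ} (hf : MemLp f p ν) {ε : ℝ≥0∞} (hε : ε ≠ 0) :
    ∃ g : X → ℝ, eLpNorm (f - g) p ν ≤ ε ∧ IsBounded (support g) ∧ ∃ K, LipschitzWith K g :=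
  hf.induction_dense hp _
    (fun c _ hs hsν _ hε => exists_lipschitzWith_isBounded_support_eLpNorm_sub_indicator_le
      hν hp c hs hsν hε)
    (fun _ _ ⟨hfb, _, hfK⟩ ⟨hgb, _, hgK⟩ =>
      ⟨(hfb.union hgb).subset (support_add _ _), _, hfK.add hgK⟩)
    (fun _ ⟨_, _, hK⟩ => hK.continuous.aestronglyMeasurable) hε

end Approximation

theorem MemLp.exists_lipschitzWith_isBounded_support_eLpNorm_sub_le_of_ae_eq_borel
    {X : Type*} [PseudoMetricSpace X] [m : MeasurableSpace X] (hm : borel X ≤ m) {μ : Measure X}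
    (hμ : ∀ A : Set X, MeasurableSet A → IsBounded A → μ A < ∞) {p : ℝ≥0∞} (hp : p ≠ ∞)
    {f : X → ℝ} (hf : MemLp f p μ) {g₀ : X → ℝ} (hg₀ : Measurable[borel X] g₀)
    (hfg₀ : f =ᵐ[μ] g₀) {ε : ℝ≥0∞} (hε : ε ≠ 0) :
    ∃ g : X → ℝ, eLpNorm (f - g) p μ ≤ ε ∧ IsBounded (support g) ∧ ∃ K, LipschitzWith K g := by
  have : @BorelSpace X _ (borel X) := @BorelSpace.mk X _ (borel X) rfl
  have hg₀' : StronglyMeasurable[borel X] g₀ := hg₀.stronglyMeasurable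
  have hμ' : ∀ A, MeasurableSet[borel X] A → IsBounded A → μ.trim hm A < ∞ := fun A hA hAb => by
    rw [trim_measurableSet_eq hm hA]
    exact hμ A (hm A hA) hAb
  have hg₀Lp : MemLp g₀ p (μ.trim hm) :=
    ⟨hg₀'.aestronglyMeasurable, by rw [eLpNorm_trim hm hg₀']; exact (hf.ae_eq hfg₀).2⟩
  obtain ⟨g, hg, hgb, K, hgK⟩ :=
    @MemLp.exists_lipschitzWith_isBounded_support_eLpNorm_sub_le X _ (borel X) _ _ hμ' _ hp _
      hg₀Lp _ hε
  refine ⟨g, ?_, hgb, K, hgK⟩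
  rwa [eLpNorm_congr_ae (hfg₀.sub (ae_eq_refl g)), ← eLpNorm_trim hm
    (hg₀'.sub hgK.continuous.borel_measurable.stronglyMeasurable)]

end MeasureTheory

theorem holder_boundedSupport_approx_of_borelRepresentative_general
    {X : Type*} [MetricSpace X] [m : MeasurableSpace X]
    (hm : borel X ≤ m)
    (μ : Measure X)
    (hμ : ∀ A : Set X, MeasurableSet A → IsBounded A → μ A < ⊤)
    (p : ℝ)
    (η : ℝ) (hη₀ : 0 < η) (hη₁ : η ≤ 1)
    (f : X → ℝ) (hf : MemLp f (ENNReal.ofReal p) μ)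
    (hfBorel : ∃ g₀ : X → ℝ, Measurable[borel X] g₀ ∧ f =ᵐ[μ] g₀)
    (ε : ℝ) (hε : 0 < ε) :
    ∃ (g : X → ℝ) (C : ℝ),
      IsBounded {x | g x ≠ 0} ∧
      (∀ x y : X, |g x - g y| ≤ C * dist x y ^ η) ∧
      eLpNorm (fun x => f x - g x) (ENNReal.ofReal p) μ < ENNReal.ofReal ε := by
  obtain ⟨g₀, hg₀, hfg₀⟩ := hfBorel
  have hε' : ENNReal.ofReal ε ≠ 0 := (ENNReal.ofReal_pos.2 hε).ne'
  obtain ⟨g, hfg, hgb, K, hgK⟩ :=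
    hf.exists_lipschitzWith_isBounded_support_eLpNorm_sub_le_of_ae_eq_borel hm hμ
      ENNReal.ofReal_ne_top hg₀ hfg₀ (ENNReal.half_pos hε').ne'
  obtain ⟨C, hC⟩ := hgK.exists_holderWith_of_isBounded_range
    (hgK.isBounded_range_of_isBounded_support hgb) (Real.toNNReal_le_one.2 hη₁)
  refine ⟨g, C, hgb, fun x y => ?_,
    hfg.trans_lt (ENNReal.half_lt_self hε' ENNReal.ofReal_ne_top)⟩
  simpa [Real.dist_eq, Real.coe_toNNReal _ hη₀.le] using hC.dist_le x y

/-- Hölder version of the corrected conclusion of Proposition 4.5 of Aimar–Hartzstein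
without the regularity hypothesis: every `f ∈ L^p(μ)` (`1 ≤ p < ∞`) admitting a
Borel-measurable representative can be approximated in `L^p` by Hölder continuous
functions of exponent `η ∈ (0,1]` with bounded support. -/
theorem holder_boundedSupport_approx_of_borelRepresentative
    {X : Type*} [MetricSpace X] [m : MeasurableSpace X]
    (hm : borel X ≤ m)
    (μ : Measure X)
    (hμ : ∀ A : Set X, MeasurableSet A → IsBounded A → μ A < ⊤)
    (p : ℝ) (hp : 1 ≤ p)
    (η : ℝ) (hη₀ : 0 < η) (hη₁ : η ≤ 1)
    (f : X → ℝ) (hf : MemLp f (ENNReal.ofReal p) μ)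
    (hfBorel : ∃ g₀ : X → ℝ, Measurable[borel X] g₀ ∧ f =ᵐ[μ] g₀)
    (ε : ℝ) (hε : 0 < ε) :
    ∃ (g : X → ℝ) (C : ℝ),
      IsBounded {x | g x ≠ 0} ∧
      (∀ x y : X, |g x - g y| ≤ C * dist x y ^ η) ∧
      eLpNorm (fun x => f x - g x) (ENNReal.ofReal p) μ < ENNReal.ofReal ε :=
  holder_boundedSupport_approx_of_borelRepresentative_general (m := m) hm μ hμ p η hη₀ hη₁ f hf
    hfBorel ε hε
end
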